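/- arXiv:2511.21093 — 5 statements merged into one kernel-verified Lean document; each statement's English description precedes it below -/
import Mathlib

section
/- Productivity composes relationally: if f₁ : Stream T → Stream T is p₁-productive and f₂ : Stream T → Stream T is p₂-productive (with p₁, p₂ ⊆ ℕ × ℕ), then f₂ ∘ f₁ is (p₁ ∘ p₂)-productive, where p₁ ∘ p₂ = {(n, m) | ∃ k, p₁ (n, k) ∧ p₂ (k, m)}. -/
/-- `f` is `p`-productive. -/
def Productive {T : Type*} (p : ℕ × ℕ → Prop) (f : (ℕ → T) → (ℕ → T)) : Prop :=
  ∀ (m : ℕ) (s₁ s₂ : ℕ → T),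
    (∀ n, p (n, m) → ∀ i < n, s₁ i = s₂ i) → ∀ i < m, f s₁ i = f s₂ i

theorem productive_comp {T : Type*} (p₁ p₂ : ℕ × ℕ → Prop)
    (f₁ f₂ : (ℕ → T) → (ℕ → T))
    (h₁ : Productive p₁ f₁) (h₂ : Productive p₂ f₂) :
    Productive (fun x => ∃ k, p₁ (x.1, k) ∧ p₂ (k, x.2)) (f₂ ∘ f₁) := by
  intro m s₁ s₂ hyp
  exact h₂ m (f₁ s₁) (f₁ s₂) fun k hk =>
    h₁ k s₁ s₂ fun n hn => hyp n ⟨k, hn, hk⟩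
end

section
/- Productivity of pairing: if f₁ : Stream T → Stream T is p₁-productive and f₂ : Stream T → Stream T is p₂-productive, then the pairing x ↦ (f₁ x, f₂ x) is productive with productivity relating input level n to output level (m₁, m₂) whenever p₁ (n, m₁) or p₂ (n, m₂); that is, for all output levels (m₁, m₂) and streams s₁, s₂, if s₁ and s₂ agree up to every n with p₁ (n, m₁) ∨ p₂ (n, m₂), then f₁ s₁ agrees with f₁ s₂ up to m₁ and f₂ s₁ agrees with f₂ s₂ up to m₂. -/
theorem productive_pair {T : Type*} (p₁ p₂ : ℕ × ℕ → Prop)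
    (f₁ f₂ : (ℕ → T) → (ℕ → T))
    (h₁ : Productive p₁ f₁) (h₂ : Productive p₂ f₂) :
    ∀ (m₁ m₂ : ℕ) (s₁ s₂ : ℕ → T),
      (∀ n, p₁ (n, m₁) ∨ p₂ (n, m₂) → ∀ i < n, s₁ i = s₂ i) →
      (∀ i < m₁, f₁ s₁ i = f₁ s₂ i) ∧ (∀ i < m₂, f₂ s₁ i = f₂ s₂ i) := by
  intro m₁ m₂ s₁ s₂ h
  exact ⟨h₁ m₁ s₁ s₂ (fun n hn => h n (Or.inl hn)),
         h₂ m₂ s₁ s₂ (fun n hn => h n (Or.inr hn))⟩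
end

section
/- Fixed point of a 1-productive function on streams: suppose T is nonempty and F : Stream T → Stream T satisfies: for all n and streams s₁, s₂, if s₁ and s₂ agree on their first n elements, then F s₁ and F s₂ agree on their first n+1 elements. Then F has a unique fixed point: there exists exactly one stream s with F s = s. -/
theorem fixed_point_of_one_productive {T : Type*} [Nonempty T]
    (F : (ℕ → T) → (ℕ → T))
    (hF : ∀ (n : ℕ) (s₁ s₂ : ℕ → T),
      (∀ i < n, s₁ i = s₂ i) → ∀ i < n + 1, F s₁ i = F s₂ i) :
    ∃! s : ℕ → T, F s = s := by
  obtain ⟨a⟩ := ‹Nonempty T›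
  set s0 : ℕ → T := fun _ => a with hs0
  -- step lemma
  have step : ∀ k, ∀ i < k, F^[k] s0 i = F^[k+1] s0 i := by
    intro k
    induction k with
    | zero => intro i hi; omega
    | succ k ih =>
      intro i hi
      have h1 : F^[k+1] s0 = F (F^[k] s0) := Function.iterate_succ_apply' F k s0
      have h2 : F^[k+2] s0 = F (F^[k+1] s0) := Function.iterate_succ_apply' F (k+1) s0
      rw [h1, h2]
      exact hF k _ _ ih i hi
  have mono : ∀ k j, ∀ i < k, F^[k] s0 i = F^[k+j] s0 i := by
    intro k j
    induction j with
    | zero => intro i hi; rfl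
    | succ j ih =>
      intro i hi
      rw [ih i hi]
      have := step (k+j) i (by omega)
      rw [this]; ring_nf
  set s : ℕ → T := fun n => F^[n+1] s0 n with hs
  have key : ∀ k, ∀ i < k, F^[k] s0 i = s i := by
    intro k i hi
    have h1 := mono (i+1) (k - (i+1)) i (by omega)
    have : i + 1 + (k - (i+1)) = k := by omega
    rw [this] at h1
    exact h1.symm
  have hfix : F s = s := by
    funext i
    have hagree : ∀ j < i + 1, s j = F^[i+1] s0 j := by
      intro j hj
      exact (key (i+1) j hj).symm
    have := hF (i+1) s (F^[i+1] s0) hagree i (by omega)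
    rw [this]
    have h2 : F (F^[i+1] s0) = F^[i+2] s0 := (Function.iterate_succ_apply' F (i+1) s0).symm
    rw [h2]
    exact key (i+2) i (by omega)
  refine ⟨s, hfix, ?_⟩
  intro t ht
  funext i
  have huniq : ∀ n, ∀ i < n, t i = s i := by
    intro n
    induction n with
    | zero => intro i hi; omega
    | succ n ih =>
      intro i hi
      have := hF n t s ih i hi
      rwa [ht, hfix] at this
  exact huniq (i+1) i (by omega)
end

section
/- Fixed point of a 1/2-productive function on streams: suppose T is nonempty and F : Stream T → Stream T satisfies: for all n and streams s₁, s₂, if s₁ and s₂ agree on their first n elements, then F (F s₁) and F (F s₂) agree on their first n+1 elements, and moreover F is 0-productive (agreement up to n on inputs yields agreement up to n on outputs). Then F has a unique fixed point. -/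
theorem fixed_point_of_half_productive {T : Type*} [Nonempty T]
    (F : (ℕ → T) → (ℕ → T))
    (hFF : ∀ (n : ℕ) (s₁ s₂ : ℕ → T),
      (∀ i < n, s₁ i = s₂ i) → ∀ i < n + 1, F (F s₁) i = F (F s₂) i)
    (hF : ∀ (n : ℕ) (s₁ s₂ : ℕ → T),
      (∀ i < n, s₁ i = s₂ i) → ∀ i < n, F s₁ i = F s₂ i) :
    ∃! s : ℕ → T, F s = s := by
  classical
  set G : (ℕ → T) → (ℕ → T) := fun s => F (F s) with hGdef
  have hG : ∀ (n : ℕ) (s₁ s₂ : ℕ → T),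
      (∀ i < n, s₁ i = s₂ i) → ∀ i < n + 1, G s₁ i = G s₂ i := hFF
  -- uniqueness of fixed points of G
  have uniqG : ∀ t₁ t₂ : ℕ → T, G t₁ = t₁ → G t₂ = t₂ → t₁ = t₂ := by
    intro t₁ t₂ h₁ h₂
    funext i
    have key : ∀ n, ∀ i < n, t₁ i = t₂ i := by
      intro n
      induction n with
      | zero => intro i hi; omega
      | succ n ih =>
        intro i hi
        have := hG n t₁ t₂ ih i hi
        rwa [h₁, h₂] at this
    exact key (i + 1) i (Nat.lt_succ_self i)
  obtain ⟨a⟩ : Nonempty (ℕ → T) := ⟨fun _ => Classical.arbitrary T⟩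
  -- iterates of G stabilize
  have step : ∀ m, ∀ i < m, G^[m] a i = G^[m + 1] a i := by
    intro m
    induction m with
    | zero => intro i hi; omega
    | succ m ih =>
      intro i hi
      have := hG m (G^[m] a) (G^[m + 1] a) ih i hi
      have e1 := congrFun (Function.iterate_succ_apply' G m a) i
      have e2 := congrFun (Function.iterate_succ_apply' G (m + 1) a) i
      exact e1.trans (this.trans e2.symm)
  have chain : ∀ n m, m ≤ n → ∀ i < m, G^[m] a i = G^[n] a i := by
    intro n
    induction n with
    | zero => intro m hm i hi; omega
    | succ n ih =>
      intro m hm i hi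
      rcases Nat.lt_or_ge m (n + 1) with h | h
      · have hmn : m ≤ n := by omega
        rw [ih m hmn i hi, step n i (by omega)]
      · have : m = n + 1 := by omega
        subst this; rfl
  set s : ℕ → T := fun i => G^[i + 1] a i with hsdef
  have agree_s : ∀ n, ∀ i < n, s i = G^[n] a i := by
    intro n i hi
    exact chain n (i + 1) (by omega) i (by omega)
  have hGs : G s = s := by
    funext i
    have h1 : G s i = G (G^[i + 1] a) i :=
      hG i s (G^[i + 1] a) (fun j hj => agree_s (i + 1) j (by omega)) i (by omega)
    have h2 : G (G^[i + 1] a) i = G^[i + 2] a i :=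
      congrFun (Function.iterate_succ_apply' G (i + 1) a).symm i
    have h3 : G^[i + 1] a i = G^[i + 2] a i := step (i + 1) i (by omega)
    simp only [hsdef]
    rw [h1, h2, ← h3]
  have hFs : F s = s := by
    have hGFs : G (F s) = F s := by
      show F (F (F s)) = F s
      have : F (G s) = F s := by rw [hGs]
      exact this
    exact uniqG (F s) s hGFs hGs
  refine ⟨s, hFs, ?_⟩
  intro t ht
  have hGt : G t = t := by show F (F t) = t; rw [ht, ht]
  exact uniqG t s hGt hGs
end

section
/- Given a list l over T of length k and a function f : Stream T → Stream T that is (-n)-productive for some n < k (i.e., for all m, agreement of inputs up to m + n implies agreement of outputs up to m), the function G := fun x => l ++ f x (prepending the list l to the stream f x) has a unique fixed point. -/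
/-- Prepend a list to a stream. -/
def listAppend {T : Type*} (l : List T) (t : ℕ → T) : ℕ → T :=
  fun i => if h : i < l.length then l.get ⟨i, h⟩ else t (i - l.length)

theorem fixed_point_of_list_prepend {T : Type*} [Nonempty T]
    (l : List T) (n : ℕ) (hn : n < l.length)
    (f : (ℕ → T) → (ℕ → T))
    (hf : ∀ (m : ℕ) (s₁ s₂ : ℕ → T),
      (∀ i < m + n, s₁ i = s₂ i) → ∀ i < m, f s₁ i = f s₂ i) :
    ∃! s : ℕ → T, listAppend l (f s) = s := by
  set k := l.length with hk
  set G : (ℕ → T) → (ℕ → T) := fun s => listAppend l (f s) with hG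
  have key : ∀ (m : ℕ) (s₁ s₂ : ℕ → T), (∀ i < m, s₁ i = s₂ i) →
      ∀ i < m + 1, G s₁ i = G s₂ i := by
    intro m s₁ s₂ hagree i hi
    simp only [hG, listAppend]
    split
    · rfl
    · rename_i h
      push_neg at h
      have h1 : i - k < m - n := by omega
      exact hf (m - n) s₁ s₂ (fun j hj => hagree j (by omega)) _ h1
  let seq : ℕ → (ℕ → T) := fun j => G^[j] (Classical.arbitrary _)
  have hseqs : ∀ j, seq (j + 1) = G (seq j) := by
    intro j; simp only [seq, Function.iterate_succ_apply']
  have step : ∀ j, ∀ i < j, seq j i = seq (j + 1) i := by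
    intro j
    induction j with
    | zero => intro i hi; omega
    | succ j ih =>
      intro i hi
      rw [hseqs, hseqs]
      exact key j (seq j) (seq (j + 1)) ih i hi
  have mono : ∀ j₁ j₂, j₁ ≤ j₂ → ∀ i < j₁, seq j₁ i = seq j₂ i := by
    intro j₁ j₂ h
    induction j₂, h using Nat.le_induction with
    | base => intro i hi; rfl
    | succ j₂ hj ih =>
      intro i hi
      rw [ih i hi]
      exact step j₂ i (by omega)
  set s : ℕ → T := fun i => seq (i + 1) i with hs
  have sagree : ∀ j, ∀ i < j, s i = seq j i := by
    intro j i hi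
    exact mono (i + 1) j (by omega) i (by omega)
  have hfix : G s = s := by
    funext i
    have h1 : G s i = G (seq (i + 1)) i :=
      key (i + 1) s (seq (i + 1)) (fun j hj => sagree (i + 1) j hj) i (by omega)
    rw [h1, ← hseqs]
    exact (step (i + 1) i (by omega)).symm
  refine ⟨s, hfix, ?_⟩
  intro t ht
  funext i
  induction i using Nat.strong_induction_on with
  | _ i ih =>
    have : G t i = G s i := key i t s (fun j hj => ih j hj) i (by omega)
    rw [show G t i = t i from congrFun ht i] at this; rw [this, hfix]
end
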